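/- For any array A of distinct elements, the number of inversions kinv is at most the total displacement ksum, and ksum is at most 2·kinv. -/

import Mathlib

/-- `rank A i` is the number of elements of the array `A` that are smaller than `A i`. -/
def rank {n : ℕ} (A : Fin n → ℤ) (i : Fin n) : ℕ :=
  (Finset.univ.filter (fun j => A j < A i)).card

/-- The total displacement of the array `A`. -/
def ksum {n : ℕ} (A : Fin n → ℤ) : ℕ :=
  ∑ i : Fin n, ((i : ℤ) - rank A i).natAbs

/-- The number of inversions of the array `A`. -/
def kinv {n : ℕ} (A : Fin n → ℤ) : ℕ :=
  ((Finset.univ ×ˢ Finset.univ).filter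
    (fun p : Fin n × Fin n => p.1 < p.2 ∧ A p.2 < A p.1)).card

/-!
The upper bound is pointwise: `k - rank A k` is the number of larger entries to the left of
position `k` minus the number of smaller entries to its right, and each of these two counts,
summed over `k`, is `kinv A`.

For the lower bound, let `i` be the first position with `rank A i ≠ i` and `j` the position of
rank `i`, so that `i < j` and `i < rank A i`. Swapping the entries at `i` and `j` lowers `ksum` by
`2 * min (rank A i - i) (j - i)`. It toggles the inversion status exactly of the pairs `(i, x)`
with `x ∈ (i, j]` and `(x, j)` with `x ∈ (i, j)`, and at most `min (rank A i - i) (j - i)` pairs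
of the first kind are inversions, so `kinv` drops by less than `ksum` does. Conclude by induction
on `ksum`.
-/

open Finset Equiv

variable {n : ℕ} (A : Fin n → ℤ)

lemma rank_le_rank_of_le {p q : Fin n} (h : A p ≤ A q) : rank A p ≤ rank A q :=
  card_le_card fun x hx => by
    simp only [mem_filter, mem_univ, true_and] at hx ⊢
    exact hx.trans_le h

lemma rank_lt_rank_of_lt {p q : Fin n} (h : A p < A q) : rank A p < rank A q :=
  card_lt_card <| ssubset_iff_of_subset (fun x hx => by
    simp only [mem_filter, mem_univ, true_and] at hx ⊢; exact hx.trans h) |>.2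
    ⟨p, by simp [h], by simp⟩

lemma rank_lt_rank_iff {p q : Fin n} : rank A p < rank A q ↔ A p < A q :=
  ⟨fun h => lt_of_not_ge fun h' => (rank_le_rank_of_le A h').not_gt h, rank_lt_rank_of_lt A⟩

lemma rank_lt_card (i : Fin n) : rank A i < n := by
  unfold rank
  simpa using card_lt_univ_of_notMem (s := {j | A j < A i}) (x := i) (by simp)

variable {A}

lemma rank_injective (hinj : Function.Injective A) : Function.Injective (rank A) := by
  intro p q h
  by_contra hne
  rcases (hinj.ne hne).lt_or_gt with hlt | hlt <;> have := rank_lt_rank_of_lt A hlt <;> omega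

lemma exists_rank_eq (hinj : Function.Injective A) (v : Fin n) : ∃ j, rank A j = v := by
  have hsurj : Function.Surjective fun i => (⟨rank A i, rank_lt_card A i⟩ : Fin n) :=
    Finite.injective_iff_surjective.1 fun p q h => rank_injective hinj (Fin.mk.inj_iff.1 h)
  obtain ⟨j, hj⟩ := hsurj v
  exact ⟨j, congrArg Fin.val hj⟩

variable (A)

lemma rank_comp_perm (σ : Perm (Fin n)) (k : Fin n) : rank (A ∘ σ) k = rank A (σ k) :=
  card_equiv σ fun l => by simp

lemma kinv_eq_zero_of_forall_rank_eq (h : ∀ k, rank A k = k) : kinv A = 0 := by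
  refine card_eq_zero.2 <| filter_eq_empty_iff.2 fun ⟨p, q⟩ _ ⟨hpq, hA⟩ => ?_
  have := rank_lt_rank_of_lt A hA
  rw [h, h] at this
  exact absurd hpq (not_lt.2 (Fin.le_of_lt this))

lemma kinv_eq_sum_card_left : kinv A = ∑ q, #{p | p < q ∧ A q < A p} := by
  simp_rw [kinv, univ_product_univ, card_filter]
  rw [Fintype.sum_prod_type, sum_comm]

lemma kinv_eq_sum_card_right : kinv A = ∑ p, #{q | p < q ∧ A q < A p} := by
  simp_rw [kinv, univ_product_univ, card_filter]
  rw [Fintype.sum_prod_type]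

variable {A}

lemma natAbs_sub_rank_le (hinj : Function.Injective A) (k : Fin n) :
    ((k : ℤ) - rank A k).natAbs ≤ #{p | p < k ∧ A k < A p} + #{q | k < q ∧ A q < A k} := by
  have hk : #{p | p < k ∧ A p < A k} + #{p | p < k ∧ A k < A p} = k := by
    rw [← Fin.card_Iio k, ← card_filter_add_card_filter_not (s := Iio k) (A · < A k)]
    congr 1 <;> congr 1 <;> ext p
    · simp
    · simp only [mem_filter, mem_Iio, mem_univ, true_and, not_lt]
      exact and_congr_right fun hp => (hinj.ne hp.ne').le_iff_lt.symm
  have hr : #{p | p < k ∧ A p < A k} + #{q | k < q ∧ A q < A k} = rank A k := by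
    rw [rank, ← card_filter_add_card_filter_not (s := {j | A j < A k}) (· < k)]
    congr 1 <;> congr 1 <;> ext q
    · simp [and_comm]
    · simp only [mem_filter, mem_univ, true_and, not_lt, and_comm (a := A q < A k)]
      exact and_congr_left fun hq => (ne_of_apply_ne A hq.ne).symm.le_iff_lt.symm
  omega

lemma ksum_le_two_mul_kinv (hinj : Function.Injective A) : ksum A ≤ 2 * kinv A :=
  calc ksum A ≤ ∑ k, (#{p | p < k ∧ A k < A p} + #{q | k < q ∧ A q < A k}) :=
        sum_le_sum fun k _ => natAbs_sub_rank_le hinj k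
    _ = 2 * kinv A := by
        rw [sum_add_distrib, ← kinv_eq_sum_card_left, ← kinv_eq_sum_card_right, two_mul]

variable (A)

lemma kinv_add_card_flips (σ : Perm (Fin n)) :
    kinv A + #{e : Fin n × Fin n | e.1 < e.2 ∧ σ e.2 < σ e.1 ∧ A e.1 < A e.2} =
      kinv (A ∘ σ.symm) +
        #{e : Fin n × Fin n | e.1 < e.2 ∧ σ e.2 < σ e.1 ∧ A e.2 < A e.1} := by
  have hcomp :
      kinv (A ∘ σ.symm) = #{e : Fin n × Fin n | σ e.1 < σ e.2 ∧ A e.2 < A e.1} := by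
    rw [kinv, univ_product_univ]
    exact card_equiv (σ.symm.prodCongr σ.symm) (by simp)
  have hflip : #{e : Fin n × Fin n | e.1 < e.2 ∧ σ e.2 < σ e.1 ∧ A e.1 < A e.2} =
      #{e : Fin n × Fin n | e.2 < e.1 ∧ σ e.1 < σ e.2 ∧ A e.2 < A e.1} :=
    card_equiv (Equiv.prodComm _ _) (by simp)
  rw [hcomp, hflip, kinv, univ_product_univ]
  simp only [card_filter, ← sum_add_distrib]
  refine sum_congr rfl fun e _ => ?_
  have := σ.injective.eq_iff (a := e.1) (b := e.2)
  split_ifs <;> omega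

lemma card_flips_swap {i j : Fin n} (hij : i < j) (Q : Fin n → Fin n → Prop) [DecidableRel Q] :
    #{e : Fin n × Fin n | e.1 < e.2 ∧ swap i j e.2 < swap i j e.1 ∧ Q e.1 e.2} =
      #{x ∈ Ioc i j | Q i x} + #{x ∈ Ioo i j | Q x j} := by
  have hflips :
      ({e | e.1 < e.2 ∧ swap i j e.2 < swap i j e.1 ∧ Q e.1 e.2} : Finset (Fin n × Fin n)) =
        {x ∈ Ioc i j | Q i x}.map (.sectR i _) ∪ {x ∈ Ioo i j | Q x j}.map (.sectL _ j) := by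
    ext ⟨p, q⟩
    simp only [mem_filter, mem_univ, true_and, mem_union, mem_map, mem_Ioc, mem_Ioo,
      Function.Embedding.sectR_apply, Function.Embedding.sectL_apply, Prod.mk.injEq]
    have hflip : p < q ∧ swap i j q < swap i j p ↔
        p = i ∧ (i < q ∧ q ≤ j) ∨ (i < p ∧ p < j) ∧ q = j := by
      rw [swap_apply_def, swap_apply_def]
      split_ifs <;> omega
    rw [← and_assoc, hflip]
    constructor
    · rintro ⟨⟨rfl, hq⟩ | ⟨hp, rfl⟩, hQ⟩
      · exact .inl ⟨q, ⟨hq, hQ⟩, rfl, rfl⟩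
      · exact .inr ⟨p, ⟨hp, hQ⟩, rfl, rfl⟩
    · rintro (⟨a, ⟨ha, hQ⟩, rfl, rfl⟩ | ⟨a, ⟨ha, hQ⟩, rfl, rfl⟩)
      · exact ⟨.inl ⟨rfl, ha⟩, hQ⟩
      · exact ⟨.inr ⟨ha, rfl⟩, hQ⟩
  rw [hflips, card_union_of_disjoint, card_map, card_map]
  simp only [disjoint_left, mem_map, mem_filter, mem_Ioo]
  rintro _ ⟨a, -, rfl⟩ ⟨b, ⟨⟨hib, -⟩, -⟩, hba⟩
  exact hib.ne' (Prod.mk.inj hba).1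

variable {A}

lemma kinv_le_kinv_swap_add (hinj : Function.Injective A) {i j : Fin n} (hij : i < j)
    (hlt : ∀ y < i, A y < A i) :
    kinv A ≤ kinv (A ∘ swap i j) + 2 * min (rank A i - i) (j - i) := by
  have hflips := kinv_add_card_flips A (swap i j)
  rw [Equiv.symm_swap, card_flips_swap hij (A · < A ·),
    card_flips_swap hij (fun a b => A b < A a)] at hflips
  have hsplit : #{x ∈ Ioc i j | A x < A i} + #{x ∈ Ioc i j | A i < A x} = j - i := by
    rw [← Fin.card_Ioc, ← card_filter_add_card_filter_not (s := Ioc i j) (A · < A i)]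
    congr 1
    refine congrArg card (filter_congr fun x hx => ?_)
    rw [not_lt, (hinj.ne (mem_Ioc.1 hx).1.ne).le_iff_lt]
  have hIoo : #{x ∈ Ioo i j | A j < A x} ≤ j - i - 1 :=
    (card_filter_le _ _).trans (Fin.card_Ioo i j).le
  have hbelow : #{x ∈ Ioc i j | A x < A i} + i ≤ rank A i := by
    rw [← Fin.card_Iio i, ← card_union_of_disjoint]
    · refine card_le_card (union_subset (fun x hx => ?_) fun y hy => ?_)
      · simpa using (mem_filter.1 hx).2
      · simpa using hlt y (mem_Iio.1 hy)
    · exact disjoint_left.2 fun x hx hx' =>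
        (mem_Ioc.1 (mem_filter.1 hx).1).1.not_gt (mem_Iio.1 hx')
  omega

lemma ksum_swap_add {i j : Fin n} (hij : i < j) (hj : rank A j = i) (hi : i ≤ rank A i) :
    ksum (A ∘ swap i j) + 2 * min (rank A i - i) (j - i) = ksum A := by
  have hcomp : ksum (A ∘ swap i j) = ∑ k, ((swap i j k : ℤ) - rank A k).natAbs := by
    rw [ksum]
    conv_rhs => rw [← Equiv.sum_comp (swap i j)]
    simp only [rank_comp_perm, swap_apply_self]
  have hdiff := Fintype.sum_eq_add
    (f := fun k : Fin n =>
      (((k : ℤ) - rank A k).natAbs : ℤ) - ((swap i j k : ℤ) - rank A k).natAbs)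
    i j hij.ne fun k hk => by simp [swap_apply_of_ne_of_ne hk.1 hk.2]
  simp only [sum_sub_distrib, swap_apply_left, swap_apply_right, hj] at hdiff
  rw [← Nat.cast_sum, ← Nat.cast_sum] at hdiff
  rw [hcomp, ksum]
  have : (i : ℕ) < j := hij
  omega

lemma exists_swap_of_exists_rank_ne (hinj : Function.Injective A) (h : ∃ k, rank A k ≠ k) :
    ∃ i j : Fin n, i < j ∧ rank A j = i ∧ (i : ℕ) < rank A i ∧ ∀ y < i, A y < A i := by
  obtain ⟨i, hi, hmin⟩ := WellFounded.has_min wellFounded_lt {k | rank A k ≠ k} h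
  have hfix : ∀ y < i, rank A y = y := fun y hy => not_not.1 fun hne => hmin y hne hy
  have hlt : (i : ℕ) < rank A i := by
    refine lt_of_le_of_ne (not_lt.1 fun hsmall => ?_) (Ne.symm hi)
    have hy : (⟨rank A i, hsmall.trans i.isLt⟩ : Fin n) < i := hsmall
    exact hy.ne (rank_injective hinj (hfix _ hy))
  obtain ⟨j, hj⟩ := exists_rank_eq hinj i
  refine ⟨i, j, lt_of_not_ge fun hji => ?_, hj, hlt, fun y hy => (rank_lt_rank_iff A).1 ?_⟩
  · rcases hji.lt_or_eq with hji | rfl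
    · have := hfix j hji
      have : (j : ℕ) < i := hji
      omega
    · exact hi hj
  · rw [hfix y hy]
    exact (show (y : ℕ) < i from hy).trans hlt

theorem kinv_le_ksum (hinj : Function.Injective A) : kinv A ≤ ksum A := by
  induction hD : ksum A using Nat.strong_induction_on generalizing A with
  | _ D ih =>
    by_cases hsorted : ∀ k, rank A k = k
    · simp [kinv_eq_zero_of_forall_rank_eq A hsorted]
    obtain ⟨i, j, hij, hj, hi, hlt⟩ := exists_swap_of_exists_rank_ne hinj (not_forall.1 hsorted)
    have hksum := ksum_swap_add hij hj hi.le
    have hkinv := kinv_le_kinv_swap_add hinj hij hlt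
    have : (i : ℕ) < j := hij
    have := ih _ (by omega) (hinj.comp (swap i j).injective) rfl
    omega

/-- For distinct arrays, `kinv ≤ ksum ≤ 2 · kinv`. -/
theorem kinv_le_ksum_le_two_kinv {n : ℕ} (A : Fin n → ℤ)
    (hinj : Function.Injective A) :
    kinv A ≤ ksum A ∧ ksum A ≤ 2 * kinv A :=
  ⟨kinv_le_ksum hinj, ksum_le_two_mul_kinv hinj⟩
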